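/- (Strong soundness and completeness of CnCK) For all sets Γ, Δ of CN-formulas: Γ ⊨_CnCK Δ if and only if Γ ⊢_CnCK Δ. In particular, for every CN-formula φ, ⊢_CnCK φ if and only if φ ∈ CnCK. -/
import Mathlib


/-- Formulas of the conditional language CN. -/
inductive CNForm : Type
  | atom : ℕ → CNForm
  | conj : CNForm → CNForm → CNForm
  | disj : CNForm → CNForm → CNForm
  | impl : CNForm → CNForm → CNForm
  | neg  : CNForm → CNForm
  | boxto : CNForm → CNForm → CNForm
  | diato : CNForm → CNForm → CNForm

/-- A Fischer–Servi conditional model. -/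
structure FSCModel where
  W : Type
  nonempty : Nonempty W
  le : W → W → Prop
  le_refl : ∀ w, le w w
  le_trans : ∀ {w v u}, le w v → le v u → le w u
  R : W → Set W × Set W → W → Prop
  fs1 : ∀ {w w' v} (XY : Set W × Set W), le w w' → R w XY v → ∃ v', R w' XY v' ∧ le v v'
  fs2 : ∀ {w v v'} (XY : Set W × Set W), R w XY v → le v v' → ∃ w', le w w' ∧ R w' XY v'
  Vpos : ℕ → W → Prop
  Vneg : ℕ → W → Prop
  Vpos_mono : ∀ (p : ℕ) {w v}, le w v → Vpos p w → Vpos p v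
  Vneg_mono : ∀ (p : ℕ) {w v}, le w v → Vneg p w → Vneg p v

/-- `M.sat true φ w` is verification `M,w ⊨⁺ φ`; `M.sat false φ w` is falsification `M,w ⊨⁻ φ`.
In the conditional clauses, the accessibility relation is indexed by the bi-extension
`({x | M,x ⊨⁺ ψ}, {x | M,x ⊨⁻ ψ})` of the antecedent ψ. -/
def FSCModel.sat (M : FSCModel) : Bool → CNForm → M.W → Prop
  | true,  .atom p,   w => M.Vpos p w
  | false, .atom p,   w => M.Vneg p w
  | true,  .conj φ ψ, w => M.sat true φ w ∧ M.sat true ψ w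
  | false, .conj φ ψ, w => M.sat false φ w ∨ M.sat false ψ w
  | true,  .disj φ ψ, w => M.sat true φ w ∨ M.sat true ψ w
  | false, .disj φ ψ, w => M.sat false φ w ∧ M.sat false ψ w
  | true,  .impl φ ψ, w => ∀ v, M.le w v → M.sat true φ v → M.sat true ψ v
  | false, .impl φ ψ, w => ∀ v, M.le w v → M.sat true φ v → M.sat false ψ v
  | true,  .neg φ,    w => M.sat false φ w
  | false, .neg φ,    w => M.sat true φ w
  | true,  .boxto ψ χ, w => ∀ v, M.le w v → ∀ u,
      M.R v ({x | M.sat true ψ x}, {x | M.sat false ψ x}) u → M.sat true χ u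
  | false, .boxto ψ χ, w => ∀ v, M.le w v → ∀ u,
      M.R v ({x | M.sat true ψ x}, {x | M.sat false ψ x}) u → M.sat false χ u
  | true,  .diato ψ χ, w => ∃ u,
      M.R w ({x | M.sat true ψ x}, {x | M.sat false ψ x}) u ∧ M.sat true χ u
  | false, .diato ψ χ, w => ∃ u,
      M.R w ({x | M.sat true ψ x}, {x | M.sat false ψ x}) u ∧ M.sat false χ u

/-- CnCK-validity: `φ ∈ CnCK`. -/
def CnCKvalid (φ : CNForm) : Prop :=
  ∀ (M : FSCModel) (w : M.W), M.sat true φ w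

/-- The consequence relation of the logic CnCK: `Γ ⊨_CnCK Δ`. -/
def CnCKconseq (Γ Δ : Set CNForm) : Prop :=
  ∀ (M : FSCModel) (w : M.W), (∀ γ ∈ Γ, M.sat true γ w) → ∃ δ ∈ Δ, M.sat true δ w

/-- A Fischer–Servi conditional model is reflexive iff `R(w,(X,Y),v)` implies `v ∈ X`. -/
def FSCModel.Reflexive (M : FSCModel) : Prop :=
  ∀ {w v : M.W} (XY : Set M.W × Set M.W), M.R w XY v → v ∈ XY.1

/-- CnCK_R-validity: `φ ∈ CnCK_R`. -/
def CnCKRvalid (φ : CNForm) : Prop :=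
  ∀ (M : FSCModel), M.Reflexive → ∀ w : M.W, M.sat true φ w

/-- The consequence relation of the logic CnCK_R: `Γ ⊨_{CnCK_R} Δ`. -/
def CnCKRconseq (Γ Δ : Set CNForm) : Prop :=
  ∀ (M : FSCModel), M.Reflexive → ∀ w : M.W,
    (∀ γ ∈ Γ, M.sat true γ w) → ∃ δ ∈ Δ, M.sat true δ w

/-- `φ ↔ ψ` abbreviates `(φ→ψ)∧(ψ→φ)`. -/
def CNForm.iffF (φ ψ : CNForm) : CNForm :=
  CNForm.conj (CNForm.impl φ ψ) (CNForm.impl ψ φ)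

/-- Strong implication: `φ ⇒ ψ` abbreviates `(φ→ψ)∧(¬ψ→¬φ)`. -/
def CNForm.sImp (φ ψ : CNForm) : CNForm :=
  CNForm.conj (CNForm.impl φ ψ) (CNForm.impl (CNForm.neg ψ) (CNForm.neg φ))

/-- Strong equivalence: `φ ⇔ ψ` abbreviates `(φ⇒ψ)∧(ψ⇒φ)`. -/
def CNForm.sIff (φ ψ : CNForm) : CNForm :=
  CNForm.conj (CNForm.sImp φ ψ) (CNForm.sImp ψ φ)

/-- Provability in the Hilbert system CnCK. -/
inductive CnCKProv : CNForm → Prop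
  | a1 (φ ψ : CNForm) : CnCKProv (.impl φ (.impl ψ φ))
  | a2 (φ ψ χ : CNForm) :
      CnCKProv (.impl (.impl φ (.impl ψ χ)) (.impl (.impl φ ψ) (.impl φ χ)))
  | a3 (φ ψ : CNForm) : CnCKProv (.impl (.conj φ ψ) φ)
  | a4 (φ ψ : CNForm) : CnCKProv (.impl (.conj φ ψ) ψ)
  | a5 (φ ψ : CNForm) : CnCKProv (.impl φ (.impl ψ (.conj φ ψ)))
  | a6 (φ ψ : CNForm) : CnCKProv (.impl φ (.disj φ ψ))
  | a7 (φ ψ : CNForm) : CnCKProv (.impl ψ (.disj φ ψ))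
  | a8 (φ ψ χ : CNForm) :
      CnCKProv (.impl (.impl φ χ) (.impl (.impl ψ χ) (.impl (.disj φ ψ) χ)))
  | a9 (φ : CNForm) : CnCKProv (CNForm.iffF (.neg (.neg φ)) φ)
  | a10 (φ ψ : CNForm) :
      CnCKProv (CNForm.iffF (.neg (.conj φ ψ)) (.disj (.neg φ) (.neg ψ)))
  | a11 (φ ψ : CNForm) :
      CnCKProv (CNForm.iffF (.neg (.disj φ ψ)) (.conj (.neg φ) (.neg ψ)))
  | a12 (φ ψ : CNForm) :
      CnCKProv (CNForm.iffF (.neg (.impl φ ψ)) (.impl φ (.neg ψ)))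
  | g1 (φ ψ χ : CNForm) :
      CnCKProv (CNForm.iffF (.conj (.boxto φ ψ) (.boxto φ χ)) (.boxto φ (.conj ψ χ)))
  | g2 (φ ψ χ : CNForm) :
      CnCKProv (.impl (.conj (.diato φ ψ) (.boxto φ χ)) (.diato φ (.conj ψ χ)))
  | g3 (φ ψ χ : CNForm) :
      CnCKProv (CNForm.iffF (.disj (.diato φ ψ) (.diato φ χ)) (.diato φ (.disj ψ χ)))
  | g4 (φ ψ χ : CNForm) :
      CnCKProv (.impl (.impl (.diato φ ψ) (.boxto φ χ)) (.boxto φ (.impl ψ χ)))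
  | g5 (φ ψ : CNForm) : CnCKProv (.boxto φ (.impl ψ ψ))
  | g6 (φ ψ : CNForm) :
      CnCKProv (CNForm.iffF (.neg (.boxto φ ψ)) (.boxto φ (.neg ψ)))
  | g7 (φ ψ : CNForm) :
      CnCKProv (CNForm.iffF (.neg (.diato φ ψ)) (.diato φ (.neg ψ)))
  | mp {φ ψ : CNForm} : CnCKProv (.impl φ ψ) → CnCKProv φ → CnCKProv ψ
  | raBox {φ ψ : CNForm} (χ : CNForm) :
      CnCKProv (CNForm.sIff φ ψ) → CnCKProv (CNForm.sIff (.boxto φ χ) (.boxto ψ χ))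
  | rcBox {φ ψ : CNForm} (χ : CNForm) :
      CnCKProv (CNForm.iffF φ ψ) → CnCKProv (CNForm.iffF (.boxto χ φ) (.boxto χ ψ))
  | raDia {φ ψ : CNForm} (χ : CNForm) :
      CnCKProv (CNForm.sIff φ ψ) → CnCKProv (CNForm.sIff (.diato φ χ) (.diato ψ χ))
  | rcDia {φ ψ : CNForm} (χ : CNForm) :
      CnCKProv (CNForm.iffF φ ψ) → CnCKProv (CNForm.iffF (.diato χ φ) (.diato χ ψ))

/-- Derivability from premises Γ in CnCK: members of Γ, CnCK-provable formulas, modus ponens. -/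
inductive CnCKDeriv (Γ : Set CNForm) : CNForm → Prop
  | mem {φ : CNForm} : φ ∈ Γ → CnCKDeriv Γ φ
  | prov {φ : CNForm} : CnCKProv φ → CnCKDeriv Γ φ
  | mp {φ ψ : CNForm} : CnCKDeriv Γ (.impl φ ψ) → CnCKDeriv Γ φ → CnCKDeriv Γ ψ

/-- Disjunction of a nonempty list of formulas. -/
def CNForm.disjList : CNForm → List CNForm → CNForm
  | φ, [] => φ
  | φ, ψ :: l => CNForm.disj φ (CNForm.disjList ψ l)

/-- `Γ ⊢_CnCK Δ` : some disjunction of finitely many members of Δ is derivable from Γ. -/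
def CnCKturnstile (Γ Δ : Set CNForm) : Prop :=
  ∃ (θ : CNForm) (l : List CNForm), θ ∈ Δ ∧ (∀ χ ∈ l, χ ∈ Δ) ∧
    CnCKDeriv Γ (CNForm.disjList θ l)

/-! ### Auxiliary development for the proof -/

section Aux

open CNForm

theorem CnCKDeriv.mono {Γ Γ' : Set CNForm} (h : Γ ⊆ Γ') {φ : CNForm}
    (d : CnCKDeriv Γ φ) : CnCKDeriv Γ' φ := by
  induction d with
  | mem hm => exact .mem (h hm)
  | prov p => exact .prov p
  | mp _ _ ih1 ih2 => exact .mp ih1 ih2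

theorem prov_id (φ : CNForm) : CnCKProv (.impl φ φ) :=
  ((CnCKProv.a2 φ (.impl φ φ) φ).mp (CnCKProv.a1 φ (.impl φ φ))).mp (CnCKProv.a1 φ φ)

theorem CnCKDeriv.ded {Γ : Set CNForm} {φ ψ : CNForm}
    (h : CnCKDeriv (insert φ Γ) ψ) : CnCKDeriv Γ (.impl φ ψ) := by
  induction h with
  | @mem χ hχ =>
    rcases hχ with rfl | hχ
    · exact .prov (prov_id χ)
    · exact .mp (.prov (.a1 _ _)) (.mem hχ)
  | prov p => exact .mp (.prov (.a1 _ _)) (.prov p)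
  | mp _ _ ih1 ih2 => exact .mp (.mp (.prov (.a2 _ _ _)) ih1) ih2

theorem CnCKDeriv.hyp {Γ : Set CNForm} {φ : CNForm} :
    CnCKDeriv (insert φ Γ) φ := .mem (Set.mem_insert _ _)

theorem CnCKDeriv.weak {Γ : Set CNForm} {φ ψ : CNForm} (h : CnCKDeriv Γ ψ) :
    CnCKDeriv (insert φ Γ) ψ := h.mono (Set.subset_insert _ _)

theorem CnCKDeriv.cut {Γ : Set CNForm} {φ ψ : CNForm}
    (h1 : CnCKDeriv Γ φ) (h2 : CnCKDeriv (insert φ Γ) ψ) : CnCKDeriv Γ ψ :=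
  h2.ded.mp h1

theorem CnCKDeriv.and_intro {Γ : Set CNForm} {φ ψ : CNForm}
    (h1 : CnCKDeriv Γ φ) (h2 : CnCKDeriv Γ ψ) : CnCKDeriv Γ (.conj φ ψ) :=
  ((CnCKDeriv.prov (.a5 φ ψ)).mp h1).mp h2

theorem CnCKDeriv.and_left {Γ : Set CNForm} {φ ψ : CNForm}
    (h : CnCKDeriv Γ (.conj φ ψ)) : CnCKDeriv Γ φ :=
  (CnCKDeriv.prov (.a3 φ ψ)).mp h

theorem CnCKDeriv.and_right {Γ : Set CNForm} {φ ψ : CNForm}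
    (h : CnCKDeriv Γ (.conj φ ψ)) : CnCKDeriv Γ ψ :=
  (CnCKDeriv.prov (.a4 φ ψ)).mp h

theorem CnCKDeriv.or_inl {Γ : Set CNForm} {φ : CNForm} (ψ : CNForm)
    (h : CnCKDeriv Γ φ) : CnCKDeriv Γ (.disj φ ψ) :=
  (CnCKDeriv.prov (.a6 φ ψ)).mp h

theorem CnCKDeriv.or_inr {Γ : Set CNForm} {ψ : CNForm} (φ : CNForm)
    (h : CnCKDeriv Γ ψ) : CnCKDeriv Γ (.disj φ ψ) :=
  (CnCKDeriv.prov (.a7 φ ψ)).mp h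

theorem CnCKDeriv.or_elim {Γ : Set CNForm} {α β χ : CNForm}
    (h : CnCKDeriv Γ (.disj α β)) (h1 : CnCKDeriv (insert α Γ) χ)
    (h2 : CnCKDeriv (insert β Γ) χ) : CnCKDeriv Γ χ :=
  (((CnCKDeriv.prov (.a8 α β χ)).mp h1.ded).mp h2.ded).mp h

theorem prov_of_deriv_empty {φ : CNForm} (h : CnCKDeriv ∅ φ) : CnCKProv φ := by
  induction h with
  | mem hm => exact absurd hm (Set.notMem_empty _)
  | prov p => exact p
  | mp _ _ ih1 ih2 => exact ih1.mp ih2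

/-- `⊢ φ → ψ` from a derivation of `ψ` from hypothesis `φ`. -/
theorem prov_imp {φ ψ : CNForm} (h : CnCKDeriv {φ} ψ) : CnCKProv (.impl φ ψ) := by
  have : ({φ} : Set CNForm) = insert φ ∅ := by simp
  exact prov_of_deriv_empty (this ▸ h).ded

theorem prov_compose {φ ψ χ : CNForm} (h1 : CnCKProv (.impl φ ψ))
    (h2 : CnCKProv (.impl ψ χ)) : CnCKProv (.impl φ χ) :=
  prov_imp ((CnCKDeriv.prov h2).mp ((CnCKDeriv.prov h1).mp (.mem rfl)))

theorem CnCKProv.iff_mp {φ ψ : CNForm} (h : CnCKProv (CNForm.iffF φ ψ)) :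
    CnCKProv (.impl φ ψ) := (CnCKProv.a3 _ _).mp h

theorem CnCKProv.iff_mpr {φ ψ : CNForm} (h : CnCKProv (CNForm.iffF φ ψ)) :
    CnCKProv (.impl ψ φ) := (CnCKProv.a4 _ _).mp h

theorem prov_iffF {φ ψ : CNForm} (h1 : CnCKProv (.impl φ ψ))
    (h2 : CnCKProv (.impl ψ φ)) : CnCKProv (CNForm.iffF φ ψ) :=
  ((CnCKProv.a5 _ _).mp h1).mp h2

/-! ### Lists of conjunctions and disjunctions -/

/-- Conjunction of a list of formulas (empty list = a fixed theorem). -/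
def conjL : List CNForm → CNForm
  | [] => .impl (.atom 0) (.atom 0)
  | a :: l => .conj a (conjL l)

theorem deriv_conjL {Γ : Set CNForm} {l : List CNForm}
    (h : ∀ x ∈ l, CnCKDeriv Γ x) : CnCKDeriv Γ (conjL l) := by
  induction l with
  | nil => exact .prov (prov_id _)
  | cons a l ih =>
    exact (CnCKDeriv.and_intro (h a (by simp))
      (ih (fun x hx => h x (by simp [hx]))))

theorem conjL_elem {l : List CNForm} {x : CNForm} (hx : x ∈ l) :
    CnCKProv (.impl (conjL l) x) := by
  induction l with
  | nil => simp at hx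
  | cons a l ih =>
    rcases List.mem_cons.1 hx with rfl | hx
    · exact .a3 _ _
    · exact prov_compose (.a4 _ _) (ih hx)

theorem conjL_mono {l l' : List CNForm} (h : ∀ x ∈ l, x ∈ l') :
    CnCKProv (.impl (conjL l') (conjL l)) := by
  induction l with
  | nil => exact .mp (.a1 _ _) (prov_id _)
  | cons a l ih =>
    refine prov_imp (CnCKDeriv.and_intro ?_ ?_)
    · exact (CnCKDeriv.prov (conjL_elem (h a (by simp)))).mp (.mem rfl)
    · exact (CnCKDeriv.prov (ih (fun x hx => h x (by simp [hx])))).mp (.mem rfl)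

theorem conjL_imp_of_deriv {l : List CNForm} {χ : CNForm}
    (h : CnCKDeriv {x | x ∈ l} χ) : CnCKProv (.impl (conjL l) χ) := by
  induction l generalizing χ with
  | nil =>
    have : ({x : CNForm | x ∈ ([] : List CNForm)} : Set CNForm) = ∅ := by simp
    exact .mp (.a1 _ _) (prov_of_deriv_empty (this ▸ h))
  | cons a l ih =>
    have : ({x : CNForm | x ∈ a :: l} : Set CNForm) = insert a {x | x ∈ l} := by
      ext y; simp
    have h' : CnCKDeriv {x | x ∈ l} (.impl a χ) := (this ▸ h).ded
    have h'' := ih h'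
    refine prov_imp ?_
    have hc : CnCKDeriv {conjL (a :: l)} (conjL (a :: l)) := .mem rfl
    exact ((CnCKDeriv.prov h'').mp hc.and_right).mp hc.and_left

theorem deriv_to_conjL {Γ : Set CNForm} {φ : CNForm} (h : CnCKDeriv Γ φ) :
    ∃ l : List CNForm, (∀ x ∈ l, x ∈ Γ) ∧ CnCKProv (.impl (conjL l) φ) := by
  induction h with
  | @mem χ hm =>
    exact ⟨[χ], by simp [hm], conjL_elem (by simp)⟩
  | @prov χ p => exact ⟨[], by simp, .mp (.a1 _ _) p⟩
  | @mp α β _ _ ih1 ih2 =>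
    obtain ⟨l1, hl1, p1⟩ := ih1
    obtain ⟨l2, hl2, p2⟩ := ih2
    refine ⟨l1 ++ l2, ?_, ?_⟩
    · intro x hx; rcases List.mem_append.1 hx with hx | hx
      · exact hl1 x hx
      · exact hl2 x hx
    · refine prov_imp ?_
      have hc : CnCKDeriv {conjL (l1 ++ l2)} (conjL (l1 ++ l2)) := .mem rfl
      have d1 : CnCKDeriv {conjL (l1 ++ l2)} (conjL l1) :=
        (CnCKDeriv.prov (conjL_mono (fun x hx => by simp [hx]))).mp hc
      have d2 : CnCKDeriv {conjL (l1 ++ l2)} (conjL l2) :=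
        (CnCKDeriv.prov (conjL_mono (fun x hx => by simp [hx]))).mp hc
      exact ((CnCKDeriv.prov p1).mp d1).mp ((CnCKDeriv.prov p2).mp d2)

theorem disjList_intro {θ : CNForm} {l : List CNForm} {x : CNForm}
    (hx : x = θ ∨ x ∈ l) : CnCKProv (.impl x (CNForm.disjList θ l)) := by
  induction l generalizing θ with
  | nil =>
    rcases hx with rfl | hx
    · exact prov_id _
    · simp at hx
  | cons a l ih =>
    show CnCKProv (.impl x (.disj θ (CNForm.disjList a l)))
    rcases hx with rfl | hx
    · exact .a6 _ _
    · rcases List.mem_cons.1 hx with rfl | hx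
      · exact prov_compose (ih (Or.inl rfl)) (.a7 _ _)
      · exact prov_compose (ih (Or.inr hx)) (.a7 _ _)

theorem disjList_elim {θ : CNForm} {l : List CNForm} {c : CNForm}
    (h0 : CnCKProv (.impl θ c)) (h : ∀ x ∈ l, CnCKProv (.impl x c)) :
    CnCKProv (.impl (CNForm.disjList θ l) c) := by
  induction l generalizing θ with
  | nil => exact h0
  | cons a l ih =>
    show CnCKProv (.impl (.disj θ (CNForm.disjList a l)) c)
    exact ((CnCKProv.a8 _ _ _).mp h0).mp
      (ih (h a (by simp)) (fun x hx => h x (by simp [hx])))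

theorem disjList_weaken {θ θ' : CNForm} {l l' : List CNForm}
    (h0 : θ = θ' ∨ θ ∈ l') (h : ∀ x ∈ l, x = θ' ∨ x ∈ l') :
    CnCKProv (.impl (CNForm.disjList θ l) (CNForm.disjList θ' l')) :=
  disjList_elim (disjList_intro h0) (fun x hx => disjList_intro (h x hx))

/-! ### The generalized derivability relation and compactness -/

theorem DD_of_deriv {Γ Δ : Set CNForm} {δ : CNForm} (hδ : δ ∈ Δ)
    (h : CnCKDeriv Γ δ) : CnCKturnstile Γ Δ :=
  ⟨δ, [], hδ, by simp, h⟩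

theorem DD_mono_left {Γ Γ' Δ : Set CNForm} (h : Γ ⊆ Γ')
    (hd : CnCKturnstile Γ Δ) : CnCKturnstile Γ' Δ := by
  obtain ⟨θ, l, h1, h2, h3⟩ := hd
  exact ⟨θ, l, h1, h2, h3.mono h⟩

theorem DD_cut {Γ Δ : Set CNForm} {φ : CNForm} (h : CnCKDeriv Γ φ)
    (hd : CnCKturnstile (insert φ Γ) Δ) : CnCKturnstile Γ Δ := by
  obtain ⟨θ, l, h1, h2, h3⟩ := hd
  exact ⟨θ, l, h1, h2, h.cut h3⟩

theorem DD_or_cut {Γ Δ : Set CNForm} {α β : CNForm} (h : CnCKDeriv Γ (.disj α β))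
    (h1 : CnCKturnstile (insert α Γ) Δ) (h2 : CnCKturnstile (insert β Γ) Δ) :
    CnCKturnstile Γ Δ := by
  obtain ⟨θ1, l1, m1, m1', d1⟩ := h1
  obtain ⟨θ2, l2, m2, m2', d2⟩ := h2
  refine ⟨θ1, l1 ++ θ2 :: l2, m1, ?_, ?_⟩
  · intro x hx
    rcases List.mem_append.1 hx with hx | hx
    · exact m1' x hx
    · rcases List.mem_cons.1 hx with rfl | hx
      · exact m2
      · exact m2' x hx
  · refine h.or_elim ?_ ?_
    · exact (CnCKDeriv.prov (disjList_weaken (Or.inl rfl)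
        (fun x hx => Or.inr (by simp [hx])))).mp d1
    · exact (CnCKDeriv.prov (disjList_weaken (Or.inr (by simp))
        (fun x hx => Or.inr (by simp [hx])))).mp d2

theorem deriv_chain {S : ℕ → Set CNForm} (mono : ∀ {m n : ℕ}, m ≤ n → S m ⊆ S n)
    {φ : CNForm} (h : CnCKDeriv (⋃ n, S n) φ) : ∃ n, CnCKDeriv (S n) φ := by
  induction h with
  | @mem χ hm =>
    obtain ⟨_, ⟨n, rfl⟩, hn⟩ := hm
    exact ⟨n, .mem hn⟩
  | prov p => exact ⟨0, .prov p⟩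
  | mp _ _ ih1 ih2 =>
    obtain ⟨n1, d1⟩ := ih1
    obtain ⟨n2, d2⟩ := ih2
    exact ⟨max n1 n2, .mp (d1.mono (mono (le_max_left _ _)))
      (d2.mono (mono (le_max_right _ _)))⟩

theorem DD_chain {S : ℕ → Set CNForm} (mono : ∀ {m n : ℕ}, m ≤ n → S m ⊆ S n)
    {Δ : Set CNForm} (h : CnCKturnstile (⋃ n, S n) Δ) : ∃ n, CnCKturnstile (S n) Δ := by
  obtain ⟨θ, l, h1, h2, h3⟩ := h
  obtain ⟨n, d⟩ := deriv_chain mono h3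
  exact ⟨n, θ, l, h1, h2, d⟩

/-! ### Enumeration of formulas -/

def CNForm.toNat : CNForm → ℕ
  | .atom n => Nat.pair 0 n
  | .conj a b => Nat.pair 1 (Nat.pair a.toNat b.toNat)
  | .disj a b => Nat.pair 2 (Nat.pair a.toNat b.toNat)
  | .impl a b => Nat.pair 3 (Nat.pair a.toNat b.toNat)
  | .neg a => Nat.pair 4 a.toNat
  | .boxto a b => Nat.pair 5 (Nat.pair a.toNat b.toNat)
  | .diato a b => Nat.pair 6 (Nat.pair a.toNat b.toNat)

theorem CNForm.toNat_inj : ∀ a b : CNForm, a.toNat = b.toNat → a = b := by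
  intro a
  induction a with
  | atom n => intro b; cases b <;> simp [toNat, Nat.pair_eq_pair]
  | conj a1 a2 ih1 ih2 =>
    intro b; cases b <;> simp [toNat, Nat.pair_eq_pair] <;>
      exact fun h1 h2 => ⟨ih1 _ h1, ih2 _ h2⟩
  | disj a1 a2 ih1 ih2 =>
    intro b; cases b <;> simp [toNat, Nat.pair_eq_pair] <;>
      exact fun h1 h2 => ⟨ih1 _ h1, ih2 _ h2⟩
  | impl a1 a2 ih1 ih2 =>
    intro b; cases b <;> simp [toNat, Nat.pair_eq_pair] <;>
      exact fun h1 h2 => ⟨ih1 _ h1, ih2 _ h2⟩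
  | neg a ih =>
    intro b; cases b <;> simp [toNat, Nat.pair_eq_pair] <;> exact fun h => ih _ h
  | boxto a1 a2 ih1 ih2 =>
    intro b; cases b <;> simp [toNat, Nat.pair_eq_pair] <;>
      exact fun h1 h2 => ⟨ih1 _ h1, ih2 _ h2⟩
  | diato a1 a2 ih1 ih2 =>
    intro b; cases b <;> simp [toNat, Nat.pair_eq_pair] <;>
      exact fun h1 h2 => ⟨ih1 _ h1, ih2 _ h2⟩

instance : Countable CNForm := ⟨⟨CNForm.toNat, fun _ _ => CNForm.toNat_inj _ _⟩⟩

instance : Nonempty CNForm := ⟨.atom 0⟩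

/-! ### Prime theories and the pair extension lemma -/

def IsPrime (T : Set CNForm) : Prop :=
  (∀ φ, CnCKDeriv T φ → φ ∈ T) ∧ ∀ φ ψ, CNForm.disj φ ψ ∈ T → φ ∈ T ∨ ψ ∈ T

theorem isPrime_univ : IsPrime Set.univ :=
  ⟨fun _ _ => trivial, fun _ _ _ => Or.inl trivial⟩

open Classical in
noncomputable def pext (Γ Δ : Set CNForm) (f : ℕ → CNForm) : ℕ → Set CNForm
  | 0 => Γ
  | n + 1 =>
    if CnCKturnstile (insert (f n) (pext Γ Δ f n)) Δ then pext Γ Δ f n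
    else insert (f n) (pext Γ Δ f n)

theorem pext_mono_succ (Γ Δ : Set CNForm) (f : ℕ → CNForm) (n : ℕ) :
    pext Γ Δ f n ⊆ pext Γ Δ f (n + 1) := by
  rw [pext]; split_ifs
  · exact subset_rfl
  · exact Set.subset_insert _ _

theorem pext_mono (Γ Δ : Set CNForm) (f : ℕ → CNForm) {m n : ℕ} (h : m ≤ n) :
    pext Γ Δ f m ⊆ pext Γ Δ f n := by
  induction n with
  | zero => simp_all
  | succ n ih =>
    rcases Nat.le_succ_iff.1 h with h' | h'
    · exact (ih h').trans (pext_mono_succ Γ Δ f n)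
    · simp [h']

theorem pext_inv {Γ Δ : Set CNForm} (f : ℕ → CNForm) (h : ¬ CnCKturnstile Γ Δ) :
    ∀ n, ¬ CnCKturnstile (pext Γ Δ f n) Δ := by
  intro n
  induction n with
  | zero => exact h
  | succ n ih =>
    rw [pext]; split_ifs with hc
    · exact ih
    · exact hc

theorem pair_extension {Γ Δ : Set CNForm} (h : ¬ CnCKturnstile Γ Δ) :
    ∃ T : Set CNForm, Γ ⊆ T ∧ IsPrime T ∧ ¬ CnCKturnstile T Δ := by
  obtain ⟨f, hf⟩ := exists_surjective_nat CNForm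
  set T : Set CNForm := ⋃ n, pext Γ Δ f n with hT
  have hmono : ∀ {m n : ℕ}, m ≤ n → pext Γ Δ f m ⊆ pext Γ Δ f n :=
    fun h' => pext_mono Γ Δ f h'
  have hsub : ∀ n, pext Γ Δ f n ⊆ T := fun n => Set.subset_iUnion (pext Γ Δ f) n
  have hTdd : ¬ CnCKturnstile T Δ := by
    intro hc
    obtain ⟨n, hn⟩ := DD_chain hmono hc
    exact pext_inv f h n hn
  have key : ∀ φ : CNForm, ¬ CnCKturnstile (insert φ T) Δ → φ ∈ T := by
    intro φ hφ
    obtain ⟨n, rfl⟩ := hf φ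
    have : ¬ CnCKturnstile (insert (f n) (pext Γ Δ f n)) Δ := by
      intro hc
      exact hφ (DD_mono_left (Set.insert_subset_insert (hsub n)) hc)
    have hmem : f n ∈ pext Γ Δ f (n + 1) := by
      rw [pext, if_neg this]
      exact Set.mem_insert _ _
    exact hsub (n + 1) hmem
  refine ⟨T, hsub 0, ⟨?_, ?_⟩, hTdd⟩
  · intro φ hd
    refine key φ (fun hc => hTdd (DD_cut hd hc))
  · intro φ ψ hm
    by_contra hc
    push_neg at hc
    have h1 : CnCKturnstile (insert φ T) Δ := by
      by_contra h'; exact hc.1 (key φ h')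
    have h2 : CnCKturnstile (insert ψ T) Δ := by
      by_contra h'; exact hc.2 (key ψ h')
    exact hTdd (DD_or_cut (.mem hm) h1 h2)

theorem IsPrime.closed {T : Set CNForm} (hT : IsPrime T) {φ : CNForm}
    (h : CnCKDeriv T φ) : φ ∈ T := hT.1 φ h

theorem IsPrime.split {T : Set CNForm} (hT : IsPrime T) {φ ψ : CNForm}
    (h : CNForm.disj φ ψ ∈ T) : φ ∈ T ∨ ψ ∈ T := hT.2 φ ψ h

/-! ### Derived modal rules -/

theorem derivSelf (φ : CNForm) : CnCKDeriv {φ} φ := .mem rfl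

theorem prov_imp_conj {α β : CNForm} (h : CnCKProv (.impl α β)) :
    CnCKProv (CNForm.iffF α (.conj α β)) :=
  prov_iffF (prov_imp ((derivSelf α).and_intro ((CnCKDeriv.prov h).mp (derivSelf α))))
    (.a3 _ _)

theorem box_mono {α β : CNForm} (ψ : CNForm) (h : CnCKProv (.impl α β)) :
    CnCKProv (.impl (.boxto ψ α) (.boxto ψ β)) := by
  have h1 := CnCKProv.rcBox ψ (prov_imp_conj h)
  exact prov_compose (prov_compose h1.iff_mp (CnCKProv.g1 ψ α β).iff_mpr) (.a4 _ _)

theorem box_thm {ψ τ : CNForm} (h : CnCKProv τ) : CnCKProv (.boxto ψ τ) := by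
  have h1 : CnCKProv (CNForm.iffF (.impl τ τ) τ) :=
    prov_iffF ((CnCKProv.a1 τ (.impl τ τ)).mp h) (prov_imp (.prov (prov_id τ)))
  exact (CnCKProv.rcBox ψ h1).iff_mp.mp (.g5 ψ τ)

theorem dia_mono {α β : CNForm} (ψ : CNForm) (h : CnCKProv (.impl α β)) :
    CnCKProv (.impl (.diato ψ α) (.diato ψ β)) := by
  have h1 : CnCKProv (CNForm.iffF β (.disj α β)) :=
    prov_iffF (.a7 _ _) (((CnCKProv.a8 α β β).mp h).mp (prov_id β))
  exact prov_compose (prov_compose (.a6 (.diato ψ α) (.diato ψ β))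
      (CnCKProv.g3 ψ α β).iff_mp) (CnCKProv.rcDia ψ h1).iff_mpr

theorem deriv_box_conjL {Γ : Set CNForm} {ψ : CNForm} {l : List CNForm}
    (h : ∀ x ∈ l, CnCKDeriv Γ (.boxto ψ x)) : CnCKDeriv Γ (.boxto ψ (conjL l)) := by
  induction l with
  | nil => exact .prov (box_thm (prov_id _))
  | cons a l ih =>
    exact .mp (.prov (CnCKProv.g1 ψ a (conjL l)).iff_mp)
      ((h a (by simp)).and_intro (ih (fun x hx => h x (by simp [hx]))))

theorem dia_disj_prime {T : Set CNForm} (hT : IsPrime T) {ψ θ : CNForm}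
    {l : List CNForm} (h : CNForm.diato ψ (CNForm.disjList θ l) ∈ T) :
    ∃ x, (x = θ ∨ x ∈ l) ∧ CNForm.diato ψ x ∈ T := by
  induction l generalizing θ with
  | nil => exact ⟨θ, Or.inl rfl, h⟩
  | cons a l ih =>
    have h1 : CNForm.disj (.diato ψ θ) (.diato ψ (CNForm.disjList a l)) ∈ T :=
      hT.closed (.mp (.prov (CnCKProv.g3 ψ θ (CNForm.disjList a l)).iff_mpr) (.mem h))
    rcases hT.split h1 with h2 | h2
    · exact ⟨θ, Or.inl rfl, h2⟩
    · obtain ⟨x, hx, hx'⟩ := ih h2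
      rcases hx with rfl | hx
      · exact ⟨x, Or.inr (by simp), hx'⟩
      · exact ⟨x, Or.inr (by simp [hx]), hx'⟩

theorem sIff_of_provs {φ ψ : CNForm} (h1 : CnCKProv (.impl φ ψ))
    (h2 : CnCKProv (.impl (.neg ψ) (.neg φ))) (h3 : CnCKProv (.impl ψ φ))
    (h4 : CnCKProv (.impl (.neg φ) (.neg ψ))) : CnCKProv (CNForm.sIff φ ψ) :=
  ((CnCKProv.a5 _ _).mp (((CnCKProv.a5 _ _).mp h1).mp h2)).mp
    (((CnCKProv.a5 _ _).mp h3).mp h4)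

theorem sIff_mp {φ ψ : CNForm} (h : CnCKProv (CNForm.sIff φ ψ)) :
    CnCKProv (.impl φ ψ) := (CnCKProv.a3 _ _).mp ((CnCKProv.a3 _ _).mp h)

theorem sIff_mpr {φ ψ : CNForm} (h : CnCKProv (CNForm.sIff φ ψ)) :
    CnCKProv (.impl ψ φ) := (CnCKProv.a3 _ _).mp ((CnCKProv.a4 _ _).mp h)

/-! ### More propositional helpers -/

theorem conjL_of_imp {a : CNForm} {l : List CNForm}
    (h : ∀ x ∈ l, CnCKProv (.impl a x)) : CnCKProv (.impl a (conjL l)) := by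
  induction l with
  | nil => exact .mp (.a1 _ _) (prov_id _)
  | cons x l ih =>
    refine prov_imp (CnCKDeriv.and_intro ?_ ?_)
    · exact (CnCKDeriv.prov (h x (by simp))).mp (derivSelf a)
    · exact (CnCKDeriv.prov (ih (fun y hy => h y (by simp [hy])))).mp (derivSelf a)

theorem prov_curry {a b c : CNForm} (p : CnCKProv (.impl (.conj a b) c)) :
    CnCKProv (.impl a (.impl b c)) := by
  have d : CnCKDeriv (insert b (insert a ∅)) c :=
    (CnCKDeriv.prov p).mp ((CnCKDeriv.mem (by simp)).and_intro (.mem (by simp)))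
  exact prov_of_deriv_empty d.ded.ded

theorem prov_mp_conj {a b : CNForm} :
    CnCKProv (.impl (.conj (.impl a b) a) b) := by
  refine prov_imp ?_
  have h := derivSelf (CNForm.conj (.impl a b) a)
  exact h.and_left.mp h.and_right

theorem prov_imp_and {a b c : CNForm} (h1 : CnCKProv (.impl a b))
    (h2 : CnCKProv (.impl a c)) : CnCKProv (.impl a (.conj b c)) :=
  prov_imp (((CnCKDeriv.prov h1).mp (derivSelf a)).and_intro
    ((CnCKDeriv.prov h2).mp (derivSelf a)))

theorem DD_singleton {Γ : Set CNForm} {ψ : CNForm}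
    (h : CnCKturnstile Γ {ψ}) : CnCKDeriv Γ ψ := by
  obtain ⟨θ, l, h1, h2, h3⟩ := h
  rcases h1 with rfl
  refine .mp (.prov (disjList_elim (prov_id _) (fun x hx => ?_))) h3
  rcases h2 x hx with rfl
  exact prov_id _

/-- Lindenbaum: if `φ → ψ` is not provable, some prime theory contains φ but not ψ. -/
theorem exists_prime_sep {φ ψ : CNForm} (h : ¬ CnCKProv (.impl φ ψ)) :
    ∃ T : Set CNForm, IsPrime T ∧ φ ∈ T ∧ ψ ∉ T := by
  have hdd : ¬ CnCKturnstile {φ} {ψ} := fun hc => h (prov_imp (DD_singleton hc))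
  obtain ⟨T, hsub, hprime, hTdd⟩ := pair_extension hdd
  refine ⟨T, hprime, hsub rfl, fun hψ => hTdd (DD_of_deriv rfl (.mem hψ))⟩

theorem prov_imp_of_prime {φ ψ : CNForm}
    (h : ∀ T : Set CNForm, IsPrime T → φ ∈ T → ψ ∈ T) : CnCKProv (.impl φ ψ) := by
  by_contra hc
  obtain ⟨T, hprime, h1, h2⟩ := exists_prime_sep hc
  exact h2 (h T hprime h1)

theorem prov_sIff_of_prime {φ ψ : CNForm}
    (h1 : ∀ T : Set CNForm, IsPrime T → (φ ∈ T ↔ ψ ∈ T))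
    (h2 : ∀ T : Set CNForm, IsPrime T → (CNForm.neg φ ∈ T ↔ CNForm.neg ψ ∈ T)) :
    CnCKProv (CNForm.sIff φ ψ) :=
  sIff_of_provs (prov_imp_of_prime (fun T hT => (h1 T hT).1))
    (prov_imp_of_prime (fun T hT => (h2 T hT).2))
    (prov_imp_of_prime (fun T hT => (h1 T hT).2))
    (prov_imp_of_prime (fun T hT => (h2 T hT).1))

/-! ### Canonical-model existence lemmas for the conditionals -/

theorem disjList_prime {T : Set CNForm} (hT : IsPrime T) {θ : CNForm}
    {l : List CNForm} (h : CNForm.disjList θ l ∈ T) :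
    ∃ x, (x = θ ∨ x ∈ l) ∧ x ∈ T := by
  induction l generalizing θ with
  | nil => exact ⟨θ, Or.inl rfl, h⟩
  | cons a l ih =>
    rcases hT.split h with h' | h'
    · exact ⟨θ, Or.inl rfl, h'⟩
    · obtain ⟨x, hx, hx'⟩ := ih h'
      rcases hx with rfl | hx
      · exact ⟨x, Or.inr (by simp), hx'⟩
      · exact ⟨x, Or.inr (by simp [hx]), hx'⟩

/-- Key non-derivability lemma used to build successor worlds for `◇→`. -/
theorem no_DD_dia {U : Set CNForm} (hU : IsPrime U) (ψ : CNForm) (Start : Set CNForm)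
    (hcov : ∀ l : List CNForm, (∀ x ∈ l, x ∈ Start) →
      ∃ l₁ l₂ : List CNForm, (∀ x ∈ l, x ∈ l₁ ∨ x ∈ l₂) ∧
        CNForm.diato ψ (conjL l₁) ∈ U ∧ ∀ θ ∈ l₂, CNForm.boxto ψ θ ∈ U) :
    ¬ CnCKturnstile Start {σ | CNForm.diato ψ σ ∉ U} := by
  rintro ⟨θ₀, l, h1, h2, h3⟩
  obtain ⟨m, hm, hp⟩ := deriv_to_conjL h3
  obtain ⟨l₁, l₂, hcv, hdia, hbox⟩ := hcov m hm
  set D := CNForm.disjList θ₀ l with hD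
  -- ⊢ conjL l₁ → (conjL l₂ → D)
  have hcover : CnCKProv (.impl (.conj (conjL l₁) (conjL l₂)) (conjL m)) := by
    refine conjL_of_imp (fun x hx => ?_)
    rcases hcv x hx with h' | h'
    · exact prov_compose (.a3 _ _) (conjL_elem h')
    · exact prov_compose (.a4 _ _) (conjL_elem h')
  have hcur : CnCKProv (.impl (conjL l₁) (.impl (conjL l₂) D)) :=
    prov_curry (prov_compose hcover hp)
  -- ◇(conjL l₂ → D) ∈ U
  have hd1 : CnCKDeriv U (.diato ψ (.impl (conjL l₂) D)) :=
    .mp (.prov (dia_mono ψ hcur)) (.mem hdia)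
  -- □(conjL l₂) ∈ U
  have hb1 : CnCKDeriv U (.boxto ψ (conjL l₂)) :=
    deriv_box_conjL (fun x hx => .mem (hbox x hx))
  -- ◇D ∈ U
  have hd2 : CnCKDeriv U (.diato ψ D) := by
    have := CnCKDeriv.mp (.prov (.g2 ψ (.impl (conjL l₂) D) (conjL l₂)))
      (hd1.and_intro hb1)
    exact .mp (.prov (dia_mono ψ prov_mp_conj)) this
  obtain ⟨x, hx, hxU⟩ := dia_disj_prime hU (hU.closed hd2)
  rcases hx with rfl | hx
  · exact h1 hxU
  · exact h2 x hx hxU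

theorem dia_conj_cover {ψ : CNForm} {v' : Set CNForm} (hv' : IsPrime v')
    (m₁ : List CNForm) (h : ∀ x ∈ m₁, ∃ σ, σ ∈ v' ∧ x = CNForm.diato ψ σ) :
    ∃ σ, σ ∈ v' ∧ CnCKProv (.impl (.diato ψ σ) (conjL m₁)) := by
  induction m₁ with
  | nil =>
    exact ⟨.impl (.atom 0) (.atom 0), hv'.closed (.prov (prov_id _)),
      .mp (.a1 _ _) (prov_id _)⟩
  | cons x m₁ ih =>
    obtain ⟨σ₀, hσ₀, rfl⟩ := h x (by simp)
    obtain ⟨σ, hσ, hpσ⟩ := ih (fun y hy => h y (by simp [hy]))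
    refine ⟨.conj σ₀ σ, hv'.closed ((CnCKDeriv.mem hσ₀).and_intro (.mem hσ)), ?_⟩
    refine prov_imp_and (dia_mono ψ (.a3 _ _)) (prov_compose (dia_mono ψ (.a4 _ _)) hpσ)

theorem box_disj_unpack {ψ : CNForm} {P : CNForm → Prop} (θ₀ : CNForm)
    (l : List CNForm) (h0 : ∃ χ, θ₀ = CNForm.boxto ψ χ ∧ P χ)
    (h : ∀ x ∈ l, ∃ χ, x = CNForm.boxto ψ χ ∧ P χ) :
    ∃ χ₀ χl, P χ₀ ∧ (∀ c ∈ χl, P c) ∧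
      CnCKProv (.impl (CNForm.disjList θ₀ l) (.boxto ψ (CNForm.disjList χ₀ χl))) := by
  induction l generalizing θ₀ with
  | nil =>
    obtain ⟨χ₀, rfl, hχ₀⟩ := h0
    exact ⟨χ₀, [], hχ₀, by simp, prov_id _⟩
  | cons a l ih =>
    obtain ⟨χ₀, rfl, hχ₀⟩ := h0
    obtain ⟨χ₁, χl, hP1, hPl, hp⟩ := ih a (h a (by simp)) (fun x hx => h x (by simp [hx]))
    refine ⟨χ₀, χ₁ :: χl, hχ₀, ?_, ?_⟩
    · intro c hc
      rcases List.mem_cons.1 hc with rfl | hc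
      · exact hP1
      · exact hPl c hc
    · show CnCKProv (.impl (.disj (.boxto ψ χ₀) (CNForm.disjList a l))
        (.boxto ψ (.disj χ₀ (CNForm.disjList χ₁ χl))))
      exact ((CnCKProv.a8 _ _ _).mp (box_mono ψ (.a6 _ _))).mp
        (prov_compose hp (box_mono ψ (.a7 _ _)))

/-! ### The canonical frame -/

/-- Worlds of the canonical model: prime theories. -/
def PrimeT : Type := {T : Set CNForm // IsPrime T}

/-- The canonical accessibility relation. -/
def canR (T : PrimeT) (XY : Set PrimeT × Set PrimeT) (S : PrimeT) : Prop :=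
  ∃ ψ : CNForm, XY.1 = {U : PrimeT | ψ ∈ U.1} ∧
    XY.2 = {U : PrimeT | CNForm.neg ψ ∈ U.1} ∧
    (∀ χ, CNForm.boxto ψ χ ∈ T.1 → χ ∈ S.1) ∧
    (∀ χ ∈ S.1, CNForm.diato ψ χ ∈ T.1)

theorem canR_fs1 {w w' v : PrimeT} (XY : Set PrimeT × Set PrimeT)
    (hle : w.1 ⊆ w'.1) (hR : canR w XY v) :
    ∃ v', canR w' XY v' ∧ v.1 ⊆ v'.1 := by
  classical
  obtain ⟨ψ, hX, hY, hbox, hdia⟩ := hR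
  have hnd : ¬ CnCKturnstile (v.1 ∪ {χ | CNForm.boxto ψ χ ∈ w'.1})
      {σ | CNForm.diato ψ σ ∉ w'.1} := by
    refine no_DD_dia w'.2 ψ _ ?_
    intro l hl
    refine ⟨l.filter (fun x => decide (x ∈ v.1)),
      l.filter (fun x => decide (x ∉ v.1)), ?_, ?_, ?_⟩
    · intro x hx
      by_cases hv : x ∈ v.1
      · exact Or.inl (List.mem_filter.2 ⟨hx, by simp [hv]⟩)
      · exact Or.inr (List.mem_filter.2 ⟨hx, by simp [hv]⟩)
    · refine hle (hdia _ (v.2.closed (deriv_conjL (fun x hx => .mem ?_))))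
      have := List.mem_filter.1 hx
      simpa using this.2
    · intro θ hθ
      have h1 := List.mem_filter.1 hθ
      have h2 : θ ∉ v.1 := by simpa using h1.2
      rcases hl θ h1.1 with h' | h'
      · exact absurd h' h2
      · exact h'
  obtain ⟨T', hsub, hprime, hTdd⟩ := pair_extension hnd
  refine ⟨⟨T', hprime⟩, ⟨ψ, hX, hY, ?_, ?_⟩, fun x hx => hsub (Or.inl hx)⟩
  · exact fun χ hχ => hsub (Or.inr hχ)
  · intro χ hχ
    by_contra hc
    exact hTdd (DD_of_deriv hc (.mem hχ))

theorem canR_fs2 {w v v' : PrimeT} (XY : Set PrimeT × Set PrimeT)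
    (hR : canR w XY v) (hle : v.1 ⊆ v'.1) :
    ∃ w', w.1 ⊆ w'.1 ∧ canR w' XY v' := by
  classical
  obtain ⟨ψ, hX, hY, hbox, hdia⟩ := hR
  set DiaS : Set CNForm := {d | ∃ σ ∈ v'.1, d = CNForm.diato ψ σ} with hDiaS
  have hnd : ¬ CnCKturnstile (w.1 ∪ DiaS)
      {d | ∃ χ, d = CNForm.boxto ψ χ ∧ χ ∉ v'.1} := by
    rintro ⟨θ₀, l, h1, h2, h3⟩
    obtain ⟨m, hm, hp⟩ := deriv_to_conjL h3
    set m₁ := m.filter (fun x => decide (x ∈ DiaS)) with hm₁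
    set m₂ := m.filter (fun x => decide (x ∉ DiaS)) with hm₂
    have hm₂w : ∀ x ∈ m₂, x ∈ w.1 := by
      intro x hx
      have h' := List.mem_filter.1 hx
      have h'' : x ∉ DiaS := by simpa using h'.2
      rcases hm x h'.1 with h3' | h3'
      · exact h3'
      · exact absurd h3' h''
    obtain ⟨σ, hσ, hpσ⟩ := dia_conj_cover v'.2 m₁ (fun x hx => by
      have h' := List.mem_filter.1 hx
      have : x ∈ DiaS := by simpa using h'.2
      obtain ⟨σ, hσ', rfl⟩ := this
      exact ⟨σ, hσ', rfl⟩)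
    -- ⊢ conjL m₁ ∧ conjL m₂ → conjL m
    have hcover : CnCKProv (.impl (.conj (conjL m₁) (conjL m₂)) (conjL m)) := by
      refine conjL_of_imp (fun x hx => ?_)
      by_cases hd : x ∈ DiaS
      · exact prov_compose (.a3 _ _) (conjL_elem (List.mem_filter.2 ⟨hx, by simp [hd]⟩))
      · exact prov_compose (.a4 _ _) (conjL_elem (List.mem_filter.2 ⟨hx, by simp [hd]⟩))
    set D := CNForm.disjList θ₀ l with hD
    have hcur : CnCKProv (.impl (conjL m₁) (.impl (conjL m₂) D)) :=
      prov_curry (prov_compose hcover hp)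
    have hdm : CnCKDeriv w.1 (.impl (.diato ψ σ) D) := by
      refine CnCKDeriv.ded ?_
      refine .mp (.mp (.prov (prov_compose hpσ hcur)) .hyp) ?_
      exact deriv_conjL (fun x hx => .mem (Set.mem_insert_iff.2 (Or.inr (hm₂w x hx))))
    obtain ⟨χ₀, χl, hP0, hPl, hunp⟩ := box_disj_unpack (P := fun c => c ∉ v'.1) θ₀ l h1
      (fun x hx => h2 x hx)
    have hfin : CnCKDeriv w.1 (.boxto ψ (.impl σ (CNForm.disjList χ₀ χl))) := by
      refine .mp (.prov (.g4 ψ σ (CNForm.disjList χ₀ χl))) ?_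
      exact CnCKDeriv.ded (.mp (.prov hunp) ((hdm.weak).mp .hyp))
    have hX' : CNForm.disjList χ₀ χl ∈ v'.1 := by
      have h5 : CNForm.impl σ (CNForm.disjList χ₀ χl) ∈ v'.1 := hle (hbox _ (w.2.closed hfin))
      exact v'.2.closed (.mp (.mem h5) (.mem hσ))
    obtain ⟨x, hx, hxv⟩ := disjList_prime v'.2 hX'
    rcases hx with rfl | hx
    · exact hP0 hxv
    · exact hPl x hx hxv
  obtain ⟨T', hsub, hprime, hTdd⟩ := pair_extension hnd
  refine ⟨⟨T', hprime⟩, fun x hx => hsub (Or.inl hx), ψ, hX, hY, ?_, ?_⟩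
  · intro χ hχ
    by_contra hc
    exact hTdd (DD_of_deriv ⟨χ, rfl, hc⟩ (.mem hχ))
  · exact fun χ hχ => hsub (Or.inr ⟨χ, hχ, rfl⟩)

/-- Existence of a `◇`-successor containing a given formula. -/
theorem dia_forward {T : PrimeT} {ψ χ : CNForm} (h : CNForm.diato ψ χ ∈ T.1) :
    ∃ S : PrimeT, (∀ c, CNForm.boxto ψ c ∈ T.1 → c ∈ S.1) ∧
      (∀ c ∈ S.1, CNForm.diato ψ c ∈ T.1) ∧ χ ∈ S.1 := by
  classical
  have hnd : ¬ CnCKturnstile ({χ} ∪ {c | CNForm.boxto ψ c ∈ T.1})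
      {σ | CNForm.diato ψ σ ∉ T.1} := by
    refine no_DD_dia T.2 ψ _ ?_
    intro l hl
    refine ⟨l.filter (fun x => decide (x = χ)),
      l.filter (fun x => decide (x ≠ χ)), ?_, ?_, ?_⟩
    · intro x hx
      by_cases hv : x = χ
      · exact Or.inl (List.mem_filter.2 ⟨hx, by simp [hv]⟩)
      · exact Or.inr (List.mem_filter.2 ⟨hx, by simp [hv]⟩)
    · refine T.2.closed (.mp (.prov (dia_mono ψ (conjL_of_imp (fun x hx => ?_)))) (.mem h))
      have := List.mem_filter.1 hx
      have : x = χ := by simpa using this.2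
      subst this
      exact prov_id _
    · intro θ hθ
      have h1 := List.mem_filter.1 hθ
      have h2 : θ ≠ χ := by simpa using h1.2
      rcases hl θ h1.1 with h' | h'
      · exact absurd h' h2
      · exact h'
  obtain ⟨T', hsub, hprime, hTdd⟩ := pair_extension hnd
  refine ⟨⟨T', hprime⟩, fun c hc => hsub (Or.inr hc), ?_, hsub (Or.inl rfl)⟩
  intro c hc
  by_contra h'
  exact hTdd (DD_of_deriv h' (.mem hc))

/-! ### The interleaved construction for `□→` -/

theorem prov_imp_left {a a' c : CNForm} (h : CnCKProv (.impl a' a)) :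
    CnCKProv (.impl (.impl a c) (.impl a' c)) := by
  have d : CnCKDeriv (insert a' (insert (CNForm.impl a c) ∅)) c :=
    (CnCKDeriv.mem (by simp)).mp ((CnCKDeriv.prov h).mp (.mem (by simp)))
  exact prov_of_deriv_empty d.ded.ded

theorem prov_mp_thm {t c : CNForm} (ht : CnCKProv t) :
    CnCKProv (.impl (.impl t c) c) :=
  prov_imp ((derivSelf _).mp (.prov ht))

open Classical in
noncomputable def bnextU (ψ δ φ : CNForm) (P : Set CNForm × List CNForm) : Set CNForm :=
  if CnCKDeriv (insert φ P.1) (.boxto ψ (.impl (conjL P.2) δ)) then P.1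
  else insert φ P.1

open Classical in
noncomputable def bnextL (ψ δ φ : CNForm) (P : Set CNForm × List CNForm) : List CNForm :=
  if CnCKDeriv (bnextU ψ δ φ P) (.boxto ψ (.impl (conjL (φ :: P.2)) δ)) then P.2
  else φ :: P.2

noncomputable def bnext (ψ δ φ : CNForm) (P : Set CNForm × List CNForm) :
    Set CNForm × List CNForm :=
  (bnextU ψ δ φ P, bnextL ψ δ φ P)

theorem bnext_fst_sub (ψ δ φ : CNForm) (P : Set CNForm × List CNForm) :
    P.1 ⊆ (bnext ψ δ φ P).1 := by
  show P.1 ⊆ bnextU ψ δ φ P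
  unfold bnextU
  split_ifs
  · exact subset_rfl
  · exact Set.subset_insert _ _

theorem bnext_snd_sub (ψ δ φ : CNForm) (P : Set CNForm × List CNForm) :
    ∀ x ∈ P.2, x ∈ (bnext ψ δ φ P).2 := by
  show ∀ x ∈ P.2, x ∈ bnextL ψ δ φ P
  unfold bnextL
  split_ifs
  · exact fun x hx => hx
  · exact fun x hx => by simp [hx]

/-- The invariant of the construction. -/
def BInv (ψ δ : CNForm) (P : Set CNForm × List CNForm) : Prop :=
  ¬ CnCKDeriv P.1 (.boxto ψ (.impl (conjL P.2) δ))

theorem bnext_inv {ψ δ φ : CNForm} {P : Set CNForm × List CNForm}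
    (h : BInv ψ δ P) : BInv ψ δ (bnext ψ δ φ P) := by
  show ¬ CnCKDeriv (bnextU ψ δ φ P) (.boxto ψ (.impl (conjL (bnextL ψ δ φ P)) δ))
  unfold bnextL
  split_ifs with h2
  · unfold bnextU at *
    split_ifs with h1
    · exact h
    · exact h1
  · exact h2

theorem bnext_reject1 {ψ δ φ : CNForm} {P : Set CNForm × List CNForm}
    (h : φ ∉ (bnext ψ δ φ P).1) :
    CnCKDeriv (insert φ P.1) (.boxto ψ (.impl (conjL P.2) δ)) := by
  replace h : φ ∉ bnextU ψ δ φ P := h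
  unfold bnextU at h
  split_ifs at h with h1
  · exact h1
  · exact absurd (Set.mem_insert _ _) h

theorem bnext_reject2 {ψ δ φ : CNForm} {P : Set CNForm × List CNForm}
    (h : φ ∉ (bnext ψ δ φ P).2) :
    CnCKDeriv (bnext ψ δ φ P).1 (.boxto ψ (.impl (conjL (φ :: P.2)) δ)) := by
  replace h : φ ∉ bnextL ψ δ φ P := h
  show CnCKDeriv (bnextU ψ δ φ P) _
  unfold bnextL at h
  split_ifs at h with h1
  · exact h1
  · exact absurd (by simp) h

theorem bnext_delta_notMem {ψ δ φ : CNForm} {P : Set CNForm × List CNForm}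
    (h : δ ∉ P.2) : δ ∉ (bnext ψ δ φ P).2 := by
  show δ ∉ bnextL ψ δ φ P
  unfold bnextL
  split_ifs with h1
  · exact h
  · intro hc
    rcases List.mem_cons.1 hc with rfl | hc
    · exact h1 (.prov (box_thm (.a3 _ _)))
    · exact h hc

/-- The interleaved sequence. -/
noncomputable def bseq (T : Set CNForm) (ψ δ : CNForm) (f : ℕ → CNForm) :
    ℕ → Set CNForm × List CNForm
  | 0 => (T, [])
  | n + 1 => bnext ψ δ (f n) (bseq T ψ δ f n)

theorem bseq_U_mono (T : Set CNForm) (ψ δ : CNForm) (f : ℕ → CNForm) {m n : ℕ}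
    (h : m ≤ n) : (bseq T ψ δ f m).1 ⊆ (bseq T ψ δ f n).1 := by
  induction n with
  | zero => simp_all
  | succ n ih =>
    rcases Nat.le_succ_iff.1 h with h' | h'
    · exact (ih h').trans (by rw [bseq]; exact bnext_fst_sub _ _ _ _)
    · simp [h']

theorem bseq_L_mono (T : Set CNForm) (ψ δ : CNForm) (f : ℕ → CNForm) {m n : ℕ}
    (h : m ≤ n) : ∀ x ∈ (bseq T ψ δ f m).2, x ∈ (bseq T ψ δ f n).2 := by
  induction n with
  | zero => simp_all
  | succ n ih =>
    rcases Nat.le_succ_iff.1 h with h' | h'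
    · intro x hx
      rw [bseq]
      exact bnext_snd_sub _ _ _ _ x (ih h' x hx)
    · simp [h']

theorem bseq_inv {T : Set CNForm} (hT : IsPrime T) {ψ δ : CNForm}
    (h : CNForm.boxto ψ δ ∉ T) (f : ℕ → CNForm) :
    ∀ n, BInv ψ δ (bseq T ψ δ f n) := by
  intro n
  induction n with
  | zero =>
    intro hc
    refine h (hT.closed (.mp (.prov (box_mono ψ (prov_mp_thm (prov_id _)))) hc))
  | succ n ih => exact bnext_inv ih

theorem bseq_delta_notMem (T : Set CNForm) {ψ δ : CNForm} (f : ℕ → CNForm) :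
    ∀ n, δ ∉ (bseq T ψ δ f n).2 := by
  intro n
  induction n with
  | zero => simp [bseq]
  | succ n ih => exact bnext_delta_notMem ih

/-- Main lemma: witnesses for the failure of `ψ □→ δ` at a prime theory. -/
theorem box_backward {T : PrimeT} {ψ δ : CNForm} (h : CNForm.boxto ψ δ ∉ T.1) :
    ∃ A B : PrimeT, T.1 ⊆ A.1 ∧
      (∀ χ, CNForm.boxto ψ χ ∈ A.1 → χ ∈ B.1) ∧
      (∀ σ ∈ B.1, CNForm.diato ψ σ ∈ A.1) ∧ δ ∉ B.1 := by
  obtain ⟨f, hf⟩ := exists_surjective_nat CNForm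
  set U : ℕ → Set CNForm := fun n => (bseq T.1 ψ δ f n).1 with hU
  set L : ℕ → List CNForm := fun n => (bseq T.1 ψ δ f n).2 with hL
  have hUm : ∀ {m n : ℕ}, m ≤ n → U m ⊆ U n := fun h' => bseq_U_mono T.1 ψ δ f h'
  have hLm : ∀ {m n : ℕ}, m ≤ n → ∀ x ∈ L m, x ∈ L n :=
    fun h' => bseq_L_mono T.1 ψ δ f h'
  have hinv : ∀ n, ¬ CnCKDeriv (U n) (.boxto ψ (.impl (conjL (L n)) δ)) :=
    bseq_inv T.2 h f
  set A0 : Set CNForm := ⋃ n, U n with hA0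
  set B0 : Set CNForm := {x | ∃ n, x ∈ L n} with hB0
  have hUsub : ∀ n, U n ⊆ A0 := fun n => Set.subset_iUnion U n
  have hLsub : ∀ n, ∀ x ∈ L n, x ∈ B0 := fun n x hx => ⟨n, hx⟩
  -- a list of members of B0 is contained in some stage
  have hstage : ∀ l : List CNForm, (∀ x ∈ l, x ∈ B0) → ∃ n, ∀ x ∈ l, x ∈ L n := by
    intro l hl
    induction l with
    | nil => exact ⟨0, by simp⟩
    | cons a l ih =>
      obtain ⟨n1, hn1⟩ := ih (fun x hx => hl x (by simp [hx]))
      obtain ⟨n2, hn2⟩ := hl a (by simp)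
      refine ⟨max n2 n1, fun x hx => ?_⟩
      rcases List.mem_cons.1 hx with rfl | hx
      · exact hLm (le_max_left _ _) x hn2
      · exact hLm (le_max_right _ _) x (hn1 x hx)
  -- the limit invariant
  have hInvA : ∀ l : List CNForm, (∀ x ∈ l, x ∈ B0) →
      ¬ CnCKDeriv A0 (.boxto ψ (.impl (conjL l) δ)) := by
    intro l hl hc
    obtain ⟨m, hm⟩ := deriv_chain (S := U) hUm hc
    obtain ⟨n, hn⟩ := hstage l hl
    set k := max m n with hk
    have hd : CnCKDeriv (U k) (.boxto ψ (.impl (conjL l) δ)) :=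
      hm.mono (hUm (le_max_left _ _))
    refine hinv k (.mp (.prov (box_mono ψ (prov_imp_left
      (conjL_mono (fun x hx => hLm (le_max_right m n) x (hn x hx)))))) hd)
  -- the rejection certificates
  have keyA : ∀ φ : CNForm, φ ∉ A0 →
      ∃ n, CnCKDeriv (insert φ A0) (.boxto ψ (.impl (conjL (L n)) δ)) := by
    intro φ hφ
    obtain ⟨n, rfl⟩ := hf φ
    have hnm : f n ∉ (bseq T.1 ψ δ f (n + 1)).1 := fun hc => hφ (hUsub (n + 1) hc)
    have := bnext_reject1 (P := bseq T.1 ψ δ f n) hnm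
    exact ⟨n, this.mono (Set.insert_subset_insert (hUsub n))⟩
  have keyB : ∀ φ : CNForm, φ ∉ B0 →
      ∃ n, CnCKDeriv A0 (.boxto ψ (.impl (conjL (φ :: L n)) δ)) := by
    intro φ hφ
    obtain ⟨n, rfl⟩ := hf φ
    have hnm : f n ∉ (bseq T.1 ψ δ f (n + 1)).2 := fun hc => hφ (hLsub (n + 1) _ hc)
    have := bnext_reject2 (P := bseq T.1 ψ δ f n) hnm
    exact ⟨n, this.mono (hUsub (n + 1))⟩
  -- A0 is prime
  have hA0key : ∀ φ : CNForm,
      (∀ n, ¬ CnCKDeriv (insert φ A0) (.boxto ψ (.impl (conjL (L n)) δ))) → φ ∈ A0 := by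
    intro φ hφ
    by_contra hc
    obtain ⟨n, hn⟩ := keyA φ hc
    exact hφ n hn
  have hA0prime : IsPrime A0 := by
    constructor
    · intro φ hd
      refine hA0key φ (fun n hn => ?_)
      exact hInvA (L n) (hLsub n) (hd.cut hn)
    · intro α β hm
      by_contra hc
      push_neg at hc
      obtain ⟨n1, hn1⟩ := keyA α hc.1
      obtain ⟨n2, hn2⟩ := keyA β hc.2
      set k := max n1 n2 with hk
      have w1 : CnCKDeriv (insert α A0) (.boxto ψ (.impl (conjL (L k)) δ)) :=
        .mp (.prov (box_mono ψ (prov_imp_left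
          (conjL_mono (fun x hx => hLm (le_max_left n1 n2) x hx))))) hn1
      have w2 : CnCKDeriv (insert β A0) (.boxto ψ (.impl (conjL (L k)) δ)) :=
        .mp (.prov (box_mono ψ (prov_imp_left
          (conjL_mono (fun x hx => hLm (le_max_right n1 n2) x hx))))) hn2
      exact hInvA (L k) (hLsub k) ((CnCKDeriv.mem hm).or_elim w1 w2)
  -- B0 is prime
  have hB0prime : IsPrime B0 := by
    constructor
    · intro φ hd
      by_contra hc
      obtain ⟨n, hn⟩ := keyB φ hc
      obtain ⟨m, hml, hmp⟩ := deriv_to_conjL hd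
      obtain ⟨n2, hn2⟩ := hstage m hml
      set k := max n n2 with hk
      -- ⊢ conjL (L k) → φ
      have p1 : CnCKProv (.impl (conjL (L k)) φ) :=
        prov_compose (conjL_mono (fun x hx => hLm (le_max_right n n2) x (hn2 x hx))) hmp
      have p2 : CnCKProv (.impl (conjL (L k)) (conjL (L n))) :=
        conjL_mono (fun x hx => hLm (le_max_left n n2) x hx)
      have p3 : CnCKProv (.impl (.impl (conjL (φ :: L n)) δ) (.impl (conjL (L k)) δ)) :=
        prov_imp_left (prov_imp_and p1 p2)
      exact hInvA (L k) (hLsub k) (.mp (.prov (box_mono ψ p3)) hn)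
    · intro α β hm
      by_contra hc
      push_neg at hc
      obtain ⟨n1, hn1⟩ := keyB α hc.1
      obtain ⟨n2, hn2⟩ := keyB β hc.2
      obtain ⟨n3, hn3⟩ := hm
      set k := max (max n1 n2) n3 with hk
      have hαβ : CNForm.disj α β ∈ L k := hLm (le_max_right _ _) _ hn3
      -- weaken both certificates to stage k
      have w1 : CnCKDeriv A0 (.boxto ψ (.impl (conjL (α :: L k)) δ)) := by
        refine .mp (.prov (box_mono ψ (prov_imp_left (prov_imp_and ?_ ?_)))) hn1
        · exact .a3 _ _
        · refine prov_compose (.a4 _ _) (conjL_mono (fun x hx =>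
            hLm ((le_max_left n1 n2).trans (le_max_left _ _)) x hx))
      have w2 : CnCKDeriv A0 (.boxto ψ (.impl (conjL (β :: L k)) δ)) := by
        refine .mp (.prov (box_mono ψ (prov_imp_left (prov_imp_and ?_ ?_)))) hn2
        · exact .a3 _ _
        · refine prov_compose (.a4 _ _) (conjL_mono (fun x hx =>
            hLm ((le_max_right n1 n2).trans (le_max_left _ _)) x hx))
      -- combine
      have hcomb : CnCKDeriv A0 (.boxto ψ (.conj (.impl (conjL (α :: L k)) δ)
          (.impl (conjL (β :: L k)) δ))) :=
        .mp (.prov (CnCKProv.g1 ψ _ _).iff_mp) (w1.and_intro w2)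
      have p3 : CnCKProv (.impl (.conj (.impl (conjL (α :: L k)) δ)
          (.impl (conjL (β :: L k)) δ)) (.impl (conjL (L k)) δ)) := by
        have hor : CnCKProv (.impl (conjL (L k)) (.disj α β)) := conjL_elem hαβ
        have d : CnCKDeriv (insert (conjL (L k)) (insert (CNForm.conj
            (.impl (conjL (α :: L k)) δ) (.impl (conjL (β :: L k)) δ)) ∅)) δ := by
          have hLc : CnCKDeriv (insert (conjL (L k)) (insert (CNForm.conj
              (.impl (conjL (α :: L k)) δ) (.impl (conjL (β :: L k)) δ)) ∅))
              (conjL (L k)) := .mem (by simp)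
          have hC : CnCKDeriv (insert (conjL (L k)) (insert (CNForm.conj
              (.impl (conjL (α :: L k)) δ) (.impl (conjL (β :: L k)) δ)) ∅))
              (CNForm.conj (.impl (conjL (α :: L k)) δ) (.impl (conjL (β :: L k)) δ)) :=
            .mem (by simp)
          refine ((CnCKDeriv.prov hor).mp hLc).or_elim ?_ ?_
          · exact (hC.weak.and_left).mp ((CnCKDeriv.hyp).and_intro hLc.weak)
          · exact (hC.weak.and_right).mp ((CnCKDeriv.hyp).and_intro hLc.weak)
        exact prov_of_deriv_empty d.ded.ded
      exact hInvA (L k) (hLsub k) (.mp (.prov (box_mono ψ p3)) hcomb)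
  refine ⟨⟨A0, hA0prime⟩, ⟨B0, hB0prime⟩, fun x hx => hUsub 0 hx, ?_, ?_, ?_⟩
  · -- □⁻¹ A0 ⊆ B0
    intro χ hχ
    by_contra hc
    obtain ⟨n, hn⟩ := keyB χ hc
    have hcomb : CnCKDeriv A0 (.boxto ψ (.conj χ (.impl (conjL (χ :: L n)) δ))) :=
      .mp (.prov (CnCKProv.g1 ψ _ _).iff_mp) ((CnCKDeriv.mem hχ).and_intro hn)
    have p3 : CnCKProv (.impl (.conj χ (.impl (conjL (χ :: L n)) δ))
        (.impl (conjL (L n)) δ)) := by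
      have d : CnCKDeriv (insert (conjL (L n)) (insert (CNForm.conj χ
          (.impl (conjL (χ :: L n)) δ)) ∅)) δ := by
        have hC : CnCKDeriv (insert (conjL (L n)) (insert (CNForm.conj χ
            (.impl (conjL (χ :: L n)) δ)) ∅))
            (CNForm.conj χ (.impl (conjL (χ :: L n)) δ)) := .mem (by simp)
        exact (hC.and_right).mp ((hC.and_left).and_intro (.mem (by simp)))
      exact prov_of_deriv_empty d.ded.ded
    exact hInvA (L n) (hLsub n) (.mp (.prov (box_mono ψ p3)) hcomb)
  · -- ◇ B0 ⊆ A0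
    intro σ hσ
    refine hA0key _ (fun n hn => ?_)
    obtain ⟨m, hml⟩ := hσ
    set k := max m n with hk
    have hσk : σ ∈ L k := hLm (le_max_left _ _) _ hml
    have hded : CnCKDeriv A0 (.impl (.diato ψ σ) (.boxto ψ (.impl (conjL (L k)) δ))) := by
      refine CnCKDeriv.ded (.mp (.prov (box_mono ψ (prov_imp_left
        (conjL_mono (fun x hx => hLm (le_max_right m n) x hx))))) hn)
    have hg4 : CnCKDeriv A0 (.boxto ψ (.impl σ (.impl (conjL (L k)) δ))) :=
      .mp (.prov (.g4 ψ σ _)) hded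
    have p3 : CnCKProv (.impl (.impl σ (.impl (conjL (L k)) δ))
        (.impl (conjL (L k)) δ)) := by
      have d : CnCKDeriv (insert (conjL (L k)) (insert (CNForm.impl σ
          (.impl (conjL (L k)) δ)) ∅)) δ := by
        have hLc : CnCKDeriv (insert (conjL (L k)) (insert (CNForm.impl σ
            (.impl (conjL (L k)) δ)) ∅)) (conjL (L k)) := .mem (by simp)
        exact ((CnCKDeriv.mem (by simp)).mp
          ((CnCKDeriv.prov (conjL_elem hσk)).mp hLc)).mp hLc
      exact prov_of_deriv_empty d.ded.ded
    exact hInvA (L k) (hLsub k) (.mp (.prov (box_mono ψ p3)) hg4)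
  · -- δ ∉ B0
    rintro ⟨n, hn⟩
    exact bseq_delta_notMem T.1 f n hn

/-! ### The canonical model and the truth lemma -/

noncomputable def canModel : FSCModel where
  W := PrimeT
  nonempty := ⟨⟨Set.univ, isPrime_univ⟩⟩
  le := fun T S => T.1 ⊆ S.1
  le_refl := fun _ => subset_rfl
  le_trans := fun h1 h2 => h1.trans h2
  R := canR
  fs1 := fun {w w' v} XY h hR => canR_fs1 XY h hR
  fs2 := fun {w v v'} XY hR h => canR_fs2 XY hR h
  Vpos := fun p T => CNForm.atom p ∈ T.1
  Vneg := fun p T => CNForm.neg (.atom p) ∈ T.1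
  Vpos_mono := fun _ {w v} h hm => h hm
  Vneg_mono := fun _ {w v} h hm => h hm

theorem mem_iff_of_iffF {T : PrimeT} {a b : CNForm} (h : CnCKProv (CNForm.iffF a b)) :
    a ∈ T.1 ↔ b ∈ T.1 :=
  ⟨fun h' => T.2.closed (.mp (.prov h.iff_mp) (.mem h')),
   fun h' => T.2.closed (.mp (.prov h.iff_mpr) (.mem h'))⟩

theorem impl_backward {T : PrimeT} {φ ψ : CNForm} (h : CNForm.impl φ ψ ∉ T.1) :
    ∃ S : PrimeT, T.1 ⊆ S.1 ∧ φ ∈ S.1 ∧ ψ ∉ S.1 := by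
  have hnd : ¬ CnCKturnstile (insert φ T.1) {ψ} := by
    intro hc
    exact h (T.2.closed (DD_singleton hc).ded)
  obtain ⟨S, hsub, hprime, hSdd⟩ := pair_extension hnd
  exact ⟨⟨S, hprime⟩, fun x hx => hsub (Set.mem_insert_iff.2 (Or.inr hx)),
    hsub (Set.mem_insert _ _), fun hψ => hSdd (DD_of_deriv rfl (.mem hψ))⟩

theorem canR_sIff {S Su : PrimeT} {ψ : CNForm}
    (hR : canR S ({U : PrimeT | ψ ∈ U.1}, {U : PrimeT | CNForm.neg ψ ∈ U.1}) Su) :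
    ∃ ψ', CnCKProv (CNForm.sIff ψ ψ') ∧
      (∀ χ, CNForm.boxto ψ' χ ∈ S.1 → χ ∈ Su.1) ∧
      (∀ χ ∈ Su.1, CNForm.diato ψ' χ ∈ S.1) := by
  obtain ⟨ψ', hX, hY, hbox, hdia⟩ := hR
  refine ⟨ψ', prov_sIff_of_prime ?_ ?_, hbox, hdia⟩
  · intro U hU
    exact Set.ext_iff.1 hX ⟨U, hU⟩
  · intro U hU
    exact Set.ext_iff.1 hY ⟨U, hU⟩

theorem box_truth_aux {T : PrimeT} (ψ d : CNForm) :
    (∀ S : PrimeT, T.1 ⊆ S.1 → ∀ Su : PrimeT,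
      canR S ({U : PrimeT | ψ ∈ U.1}, {U : PrimeT | CNForm.neg ψ ∈ U.1}) Su → d ∈ Su.1)
    ↔ CNForm.boxto ψ d ∈ T.1 := by
  constructor
  · intro h
    by_contra hc
    obtain ⟨A, B, hTA, hbox, hdia, hd⟩ := box_backward (T := T) hc
    exact hd (h A hTA B ⟨ψ, rfl, rfl, hbox, hdia⟩)
  · intro h S hsub Su hR
    obtain ⟨ψ', hsiff, hbox, _⟩ := canR_sIff hR
    exact hbox d (S.2.closed (.mp (.prov (sIff_mp (CnCKProv.raBox d hsiff)))
      (.mem (hsub h))))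

theorem dia_truth_aux {T : PrimeT} (ψ d : CNForm) :
    (∃ Su : PrimeT,
      canR T ({U : PrimeT | ψ ∈ U.1}, {U : PrimeT | CNForm.neg ψ ∈ U.1}) Su ∧ d ∈ Su.1)
    ↔ CNForm.diato ψ d ∈ T.1 := by
  constructor
  · rintro ⟨Su, hR, hd⟩
    obtain ⟨ψ', hsiff, _, hdia⟩ := canR_sIff hR
    exact T.2.closed (.mp (.prov (sIff_mpr (CnCKProv.raDia d hsiff))) (.mem (hdia d hd)))
  · intro h
    obtain ⟨S, hbox, hdia, hd⟩ := dia_forward h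
    exact ⟨S, ⟨ψ, rfl, rfl, hbox, hdia⟩, hd⟩

theorem truth_lemma (φ : CNForm) : ∀ T : PrimeT,
    (canModel.sat true φ T ↔ φ ∈ T.1) ∧
    (canModel.sat false φ T ↔ CNForm.neg φ ∈ T.1) := by
  induction φ with
  | atom p => exact fun T => ⟨Iff.rfl, Iff.rfl⟩
  | conj φ ψ ih1 ih2 =>
    intro T
    constructor
    · show (canModel.sat true φ T ∧ canModel.sat true ψ T) ↔ _
      rw [(ih1 T).1, (ih2 T).1]
      constructor
      · rintro ⟨h1, h2⟩
        exact T.2.closed ((CnCKDeriv.mem h1).and_intro (.mem h2))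
      · intro h
        exact ⟨T.2.closed (CnCKDeriv.mem h).and_left, T.2.closed (CnCKDeriv.mem h).and_right⟩
    · show (canModel.sat false φ T ∨ canModel.sat false ψ T) ↔ _
      rw [(ih1 T).2, (ih2 T).2]
      constructor
      · rintro (h | h)
        · exact T.2.closed (.mp (.prov (CnCKProv.a10 φ ψ).iff_mpr)
            ((CnCKDeriv.mem h).or_inl _))
        · exact T.2.closed (.mp (.prov (CnCKProv.a10 φ ψ).iff_mpr)
            ((CnCKDeriv.mem h).or_inr _))
      · intro h
        exact T.2.split (T.2.closed (.mp (.prov (CnCKProv.a10 φ ψ).iff_mp) (.mem h)))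
  | disj φ ψ ih1 ih2 =>
    intro T
    constructor
    · show (canModel.sat true φ T ∨ canModel.sat true ψ T) ↔ _
      rw [(ih1 T).1, (ih2 T).1]
      constructor
      · rintro (h | h)
        · exact T.2.closed ((CnCKDeriv.mem h).or_inl _)
        · exact T.2.closed ((CnCKDeriv.mem h).or_inr _)
      · exact fun h => T.2.split h
    · show (canModel.sat false φ T ∧ canModel.sat false ψ T) ↔ _
      rw [(ih1 T).2, (ih2 T).2]
      constructor
      · rintro ⟨h1, h2⟩
        exact T.2.closed (.mp (.prov (CnCKProv.a11 φ ψ).iff_mpr)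
          ((CnCKDeriv.mem h1).and_intro (.mem h2)))
      · intro h
        have := T.2.closed (.mp (.prov (CnCKProv.a11 φ ψ).iff_mp) (.mem h))
        exact ⟨T.2.closed (CnCKDeriv.mem this).and_left,
          T.2.closed (CnCKDeriv.mem this).and_right⟩
  | impl φ ψ ih1 ih2 =>
    intro T
    have key : ∀ χ : CNForm,
        (∀ S : PrimeT, T.1 ⊆ S.1 → φ ∈ S.1 → χ ∈ S.1) ↔ CNForm.impl φ χ ∈ T.1 := by
      intro χ
      constructor
      · intro h
        by_contra hc
        obtain ⟨S, h1, h2, h3⟩ := impl_backward hc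
        exact h3 (h S h1 h2)
      · intro h S hsub hφ
        exact S.2.closed (.mp (.mem (hsub h)) (.mem hφ))
    constructor
    · show (∀ S : PrimeT, canModel.le T S → canModel.sat true φ S →
        canModel.sat true ψ S) ↔ _
      constructor
      · intro h
        exact (key ψ).1 (fun S h1 h2 => (ih2 S).1.1 (h S h1 ((ih1 S).1.2 h2)))
      · intro h S h1 h2
        exact (ih2 S).1.2 ((key ψ).2 h S h1 ((ih1 S).1.1 h2))
    · show (∀ S : PrimeT, canModel.le T S → canModel.sat true φ S →
        canModel.sat false ψ S) ↔ _
      rw [show (CNForm.neg (.impl φ ψ) ∈ T.1) ↔ (CNForm.impl φ (.neg ψ) ∈ T.1) from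
        mem_iff_of_iffF (CnCKProv.a12 φ ψ)]
      constructor
      · intro h
        exact (key (.neg ψ)).1 (fun S h1 h2 => (ih2 S).2.1 (h S h1 ((ih1 S).1.2 h2)))
      · intro h S h1 h2
        exact (ih2 S).2.2 ((key _).2 h S h1 ((ih1 S).1.1 h2))
  | neg φ ih =>
    intro T
    refine ⟨(ih T).2, ?_⟩
    show canModel.sat true φ T ↔ _
    rw [(ih T).1]
    exact (mem_iff_of_iffF (CnCKProv.a9 φ)).symm
  | boxto ψ χ ih1 ih2 =>
    intro T
    have hX : {x : canModel.W | canModel.sat true ψ x} = {U : PrimeT | ψ ∈ U.1} :=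
      Set.ext fun U => (ih1 U).1
    have hY : {x : canModel.W | canModel.sat false ψ x} =
        {U : PrimeT | CNForm.neg ψ ∈ U.1} := Set.ext fun U => (ih1 U).2
    constructor
    · show (∀ S : PrimeT, canModel.le T S → ∀ Su : PrimeT,
        canModel.R S ({x | canModel.sat true ψ x}, {x | canModel.sat false ψ x}) Su →
        canModel.sat true χ Su) ↔ _
      rw [hX, hY]
      constructor
      · intro h
        exact (box_truth_aux ψ χ).1 (fun S h1 Su h2 => (ih2 Su).1.1 (h S h1 Su h2))
      · intro h S h1 Su h2
        exact (ih2 Su).1.2 ((box_truth_aux ψ χ).2 h S h1 Su h2)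
    · show (∀ S : PrimeT, canModel.le T S → ∀ Su : PrimeT,
        canModel.R S ({x | canModel.sat true ψ x}, {x | canModel.sat false ψ x}) Su →
        canModel.sat false χ Su) ↔ _
      rw [hX, hY, show (CNForm.neg (.boxto ψ χ) ∈ T.1) ↔
        (CNForm.boxto ψ (.neg χ) ∈ T.1) from mem_iff_of_iffF (CnCKProv.g6 ψ χ)]
      constructor
      · intro h
        exact (box_truth_aux ψ (.neg χ)).1 (fun S h1 Su h2 => (ih2 Su).2.1 (h S h1 Su h2))
      · intro h S h1 Su h2
        exact (ih2 Su).2.2 ((box_truth_aux ψ (.neg χ)).2 h S h1 Su h2)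
  | diato ψ χ ih1 ih2 =>
    intro T
    have hX : {x : canModel.W | canModel.sat true ψ x} = {U : PrimeT | ψ ∈ U.1} :=
      Set.ext fun U => (ih1 U).1
    have hY : {x : canModel.W | canModel.sat false ψ x} =
        {U : PrimeT | CNForm.neg ψ ∈ U.1} := Set.ext fun U => (ih1 U).2
    constructor
    · show (∃ Su : PrimeT,
        canModel.R T ({x | canModel.sat true ψ x}, {x | canModel.sat false ψ x}) Su ∧
        canModel.sat true χ Su) ↔ _
      rw [hX, hY]
      constructor
      · rintro ⟨Su, h1, h2⟩
        exact (dia_truth_aux ψ χ).1 ⟨Su, h1, (ih2 Su).1.1 h2⟩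
      · intro h
        obtain ⟨Su, h1, h2⟩ := (dia_truth_aux ψ χ).2 h
        exact ⟨Su, h1, (ih2 Su).1.2 h2⟩
    · show (∃ Su : PrimeT,
        canModel.R T ({x | canModel.sat true ψ x}, {x | canModel.sat false ψ x}) Su ∧
        canModel.sat false χ Su) ↔ _
      rw [hX, hY, show (CNForm.neg (.diato ψ χ) ∈ T.1) ↔
        (CNForm.diato ψ (.neg χ) ∈ T.1) from mem_iff_of_iffF (CnCKProv.g7 ψ χ)]
      constructor
      · rintro ⟨Su, h1, h2⟩
        exact (dia_truth_aux ψ (.neg χ)).1 ⟨Su, h1, (ih2 Su).2.1 h2⟩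
      · intro h
        obtain ⟨Su, h1, h2⟩ := (dia_truth_aux ψ (.neg χ)).2 h
        exact ⟨Su, h1, (ih2 Su).2.2 h2⟩

/-! ### Soundness -/

theorem sat_mono {M : FSCModel} : ∀ (φ : CNForm) (b : Bool) {w v : M.W},
    M.le w v → M.sat b φ w → M.sat b φ v := by
  intro φ
  induction φ with
  | atom p =>
    intro b w v h hs
    cases b
    · exact M.Vneg_mono p h hs
    · exact M.Vpos_mono p h hs
  | conj φ ψ ih1 ih2 =>
    intro b w v h hs
    cases b
    · rcases hs with hs | hs
      · exact Or.inl (ih1 false h hs)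
      · exact Or.inr (ih2 false h hs)
    · exact ⟨ih1 true h hs.1, ih2 true h hs.2⟩
  | disj φ ψ ih1 ih2 =>
    intro b w v h hs
    cases b
    · exact ⟨ih1 false h hs.1, ih2 false h hs.2⟩
    · rcases hs with hs | hs
      · exact Or.inl (ih1 true h hs)
      · exact Or.inr (ih2 true h hs)
  | impl φ ψ ih1 ih2 =>
    intro b w v h hs
    cases b
    · exact fun u hu hφ => hs u (M.le_trans h hu) hφ
    · exact fun u hu hφ => hs u (M.le_trans h hu) hφ
  | neg φ ih =>
    intro b w v h hs
    cases b
    · exact ih true h hs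
    · exact ih false h hs
  | boxto ψ χ ih1 ih2 =>
    intro b w v h hs
    cases b
    · exact fun u hu t ht => hs u (M.le_trans h hu) t ht
    · exact fun u hu t ht => hs u (M.le_trans h hu) t ht
  | diato ψ χ ih1 ih2 =>
    intro b w v h hs
    cases b
    · obtain ⟨u, hR, hu⟩ := hs
      obtain ⟨u', hR', huu'⟩ := M.fs1 _ h hR
      exact ⟨u', hR', ih2 false huu' hu⟩
    · obtain ⟨u, hR, hu⟩ := hs
      obtain ⟨u', hR', huu'⟩ := M.fs1 _ h hR
      exact ⟨u', hR', ih2 true huu' hu⟩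

theorem sat_iffF {M : FSCModel} {w : M.W} {a b : CNForm}
    (h1 : ∀ v : M.W, M.le w v → M.sat true a v → M.sat true b v)
    (h2 : ∀ v : M.W, M.le w v → M.sat true b v → M.sat true a v) :
    M.sat true (CNForm.iffF a b) w := ⟨h1, h2⟩

theorem prov_sound {φ : CNForm} (h : CnCKProv φ) : CnCKvalid φ := by
  induction h with
  | a1 φ ψ =>
    intro M w
    exact fun v _ hφ u hu _ => sat_mono φ true hu hφ
  | a2 φ ψ χ =>
    intro M w
    intro v _ h1 u hu h2 t ht hφ
    exact h1 t (M.le_trans hu ht) hφ t (M.le_refl t)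
      (h2 t ht hφ)
  | a3 φ ψ => exact fun M w => fun v _ h => h.1
  | a4 φ ψ => exact fun M w => fun v _ h => h.2
  | a5 φ ψ =>
    intro M w
    exact fun v _ hφ u hu hψ => ⟨sat_mono φ true hu hφ, hψ⟩
  | a6 φ ψ => exact fun M w => fun v _ h => Or.inl h
  | a7 φ ψ => exact fun M w => fun v _ h => Or.inr h
  | a8 φ ψ χ =>
    intro M w
    intro v _ h1 u hu h2 t ht hd
    rcases hd with hd | hd
    · exact h1 t (M.le_trans hu ht) hd
    · exact h2 t ht hd
  | a9 φ => exact fun M w => ⟨fun v _ h => h, fun v _ h => h⟩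
  | a10 φ ψ => exact fun M w => ⟨fun v _ h => h, fun v _ h => h⟩
  | a11 φ ψ => exact fun M w => ⟨fun v _ h => h, fun v _ h => h⟩
  | a12 φ ψ => exact fun M w => ⟨fun v _ h => h, fun v _ h => h⟩
  | g1 φ ψ χ =>
    intro M w
    constructor
    · intro v _ h u hu t ht
      exact ⟨h.1 u hu t ht, h.2 u hu t ht⟩
    · intro v _ h
      exact ⟨fun u hu t ht => (h u hu t ht).1, fun u hu t ht => (h u hu t ht).2⟩
  | g2 φ ψ χ =>
    intro M w
    rintro v _ ⟨⟨u, hR, hu⟩, hbox⟩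
    exact ⟨u, hR, hu, hbox v (M.le_refl v) u hR⟩
  | g3 φ ψ χ =>
    intro M w
    constructor
    · rintro v _ (⟨u, hR, hu⟩ | ⟨u, hR, hu⟩)
      · exact ⟨u, hR, Or.inl hu⟩
      · exact ⟨u, hR, Or.inr hu⟩
    · rintro v _ ⟨u, hR, hu | hu⟩
      · exact Or.inl ⟨u, hR, hu⟩
      · exact Or.inr ⟨u, hR, hu⟩
  | g4 φ ψ χ =>
    intro M w
    intro v _ h v' hv' u hR u' hu' hψ
    obtain ⟨v'', hv'', hR'⟩ := M.fs2 _ hR hu'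
    exact h v'' (M.le_trans hv' hv'') ⟨u', hR', hψ⟩ v'' (M.le_refl v'') u' hR'
  | g5 φ ψ => exact fun M w => fun v _ u hR u' _ h => h
  | g6 φ ψ => exact fun M w => ⟨fun v _ h => h, fun v _ h => h⟩
  | g7 φ ψ => exact fun M w => ⟨fun v _ h => h, fun v _ h => h⟩
  | mp h1 h2 ih1 ih2 =>
    intro M w
    exact ih1 M w w (M.le_refl w) (ih2 M w)
  | @raBox φ ψ χ h ih =>
    intro M w
    have hset : ∀ M' : FSCModel, ({x : M'.W | M'.sat true φ x} = {x | M'.sat true ψ x})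
        ∧ ({x : M'.W | M'.sat false φ x} = {x | M'.sat false ψ x}) := by
      intro M'
      constructor
      · ext x
        exact ⟨fun hx => (ih M' x).1.1 x (M'.le_refl x) hx,
          fun hx => (ih M' x).2.1 x (M'.le_refl x) hx⟩
      · ext x
        exact ⟨fun hx => (ih M' x).2.2 x (M'.le_refl x) hx,
          fun hx => (ih M' x).1.2 x (M'.le_refl x) hx⟩
    have hkey : ∀ (b : Bool) (x : M.W),
        M.sat b (.boxto φ χ) x ↔ M.sat b (.boxto ψ χ) x := by
      intro b x
      cases b
      · show (∀ v, M.le x v → ∀ u, M.R v _ u → M.sat false χ u) ↔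
          (∀ v, M.le x v → ∀ u, M.R v _ u → M.sat false χ u)
        rw [(hset M).1, (hset M).2]
      · show (∀ v, M.le x v → ∀ u, M.R v _ u → M.sat true χ u) ↔
          (∀ v, M.le x v → ∀ u, M.R v _ u → M.sat true χ u)
        rw [(hset M).1, (hset M).2]
    exact ⟨⟨fun v _ hs => (hkey true v).1 hs, fun v _ hs => (hkey false v).2 hs⟩,
      fun v _ hs => (hkey true v).2 hs, fun v _ hs => (hkey false v).1 hs⟩
  | @rcBox φ ψ χ h ih =>
    intro M w
    constructor
    · intro v _ hs u hu t ht
      exact (ih M t).1 t (M.le_refl t) (hs u hu t ht)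
    · intro v _ hs u hu t ht
      exact (ih M t).2 t (M.le_refl t) (hs u hu t ht)
  | @raDia φ ψ χ h ih =>
    intro M w
    have hset : ∀ M' : FSCModel, ({x : M'.W | M'.sat true φ x} = {x | M'.sat true ψ x})
        ∧ ({x : M'.W | M'.sat false φ x} = {x | M'.sat false ψ x}) := by
      intro M'
      constructor
      · ext x
        exact ⟨fun hx => (ih M' x).1.1 x (M'.le_refl x) hx,
          fun hx => (ih M' x).2.1 x (M'.le_refl x) hx⟩
      · ext x
        exact ⟨fun hx => (ih M' x).2.2 x (M'.le_refl x) hx,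
          fun hx => (ih M' x).1.2 x (M'.le_refl x) hx⟩
    have hkey : ∀ (b : Bool) (x : M.W),
        M.sat b (.diato φ χ) x ↔ M.sat b (.diato ψ χ) x := by
      intro b x
      cases b
      · show (∃ u, M.R x _ u ∧ M.sat false χ u) ↔ (∃ u, M.R x _ u ∧ M.sat false χ u)
        rw [(hset M).1, (hset M).2]
      · show (∃ u, M.R x _ u ∧ M.sat true χ u) ↔ (∃ u, M.R x _ u ∧ M.sat true χ u)
        rw [(hset M).1, (hset M).2]
    exact ⟨⟨fun v _ hs => (hkey true v).1 hs, fun v _ hs => (hkey false v).2 hs⟩,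
      fun v _ hs => (hkey true v).2 hs, fun v _ hs => (hkey false v).1 hs⟩
  | @rcDia φ ψ χ h ih =>
    intro M w
    constructor
    · rintro v _ ⟨u, hR, hu⟩
      exact ⟨u, hR, (ih M u).1 u (M.le_refl u) hu⟩
    · rintro v _ ⟨u, hR, hu⟩
      exact ⟨u, hR, (ih M u).2 u (M.le_refl u) hu⟩

theorem deriv_sound {Γ : Set CNForm} {φ : CNForm} (h : CnCKDeriv Γ φ)
    {M : FSCModel} : ∀ w : M.W, (∀ γ ∈ Γ, M.sat true γ w) → M.sat true φ w := by
  induction h with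
  | mem hm => exact fun w hΓ => hΓ _ hm
  | prov p => exact fun w hΓ => prov_sound p M w
  | mp _ _ ih1 ih2 => exact fun w hΓ => ih1 w hΓ w (M.le_refl w) (ih2 w hΓ)

theorem sat_disjList {M : FSCModel} {w : M.W} {θ : CNForm} {l : List CNForm}
    (h : M.sat true (CNForm.disjList θ l) w) :
    M.sat true θ w ∨ ∃ x ∈ l, M.sat true x w := by
  induction l generalizing θ with
  | nil => exact Or.inl h
  | cons a l ih =>
    rcases h with h | h
    · exact Or.inl h
    · rcases ih h with h' | ⟨x, hx, h'⟩
      · exact Or.inr ⟨a, by simp, h'⟩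
      · exact Or.inr ⟨x, by simp [hx], h'⟩

end Aux

/-- Strong soundness and completeness of CnCK. -/
theorem CnCK_soundness_completeness :
    (∀ Γ Δ : Set CNForm, CnCKconseq Γ Δ ↔ CnCKturnstile Γ Δ) ∧
    (∀ φ : CNForm, CnCKProv φ ↔ CnCKvalid φ) := by
  have sound : ∀ (Γ Δ : Set CNForm), CnCKturnstile Γ Δ → CnCKconseq Γ Δ := by
    rintro Γ Δ ⟨θ, l, h1, h2, h3⟩ M w hΓ
    rcases sat_disjList (deriv_sound h3 w hΓ) with h | ⟨x, hx, h⟩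
    · exact ⟨θ, h1, h⟩
    · exact ⟨x, h2 x hx, h⟩
  have complete : ∀ (Γ Δ : Set CNForm), CnCKconseq Γ Δ → CnCKturnstile Γ Δ := by
    intro Γ Δ h
    by_contra hc
    obtain ⟨T, hsub, hprime, hTdd⟩ := pair_extension hc
    obtain ⟨δ, hδ, hsat⟩ := h canModel ⟨T, hprime⟩
      (fun γ hγ => (truth_lemma γ ⟨T, hprime⟩).1.2 (hsub hγ))
    exact hTdd (DD_of_deriv hδ (.mem ((truth_lemma δ ⟨T, hprime⟩).1.1 hsat)))
  refine ⟨fun Γ Δ => ⟨complete Γ Δ, sound Γ Δ⟩,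
    fun φ => ⟨fun h => prov_sound h, fun h => ?_⟩⟩
  have hc : CnCKconseq ∅ {φ} := fun M w _ => ⟨φ, rfl, h M w⟩
  exact prov_of_deriv_empty (DD_singleton (complete _ _ hc))
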